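/- arXiv:1207.4039 — 6 statements merged into one kernel-verified Lean document; each statement's English description precedes it below -/
import Mathlib

section
/- Let G be a finite abelian group (written additively), p a prime number, and d a positive integer. Let f : G → ℂ be a function such that every value f(x) is integral over ℤ[1/p] (i.e., for each x there is k ∈ ℕ with p^k · f(x) an algebraic integer), and suppose f satisfies the convolution identity ∑_{y∈G} f(x−y)·f(y) = d·f(x) for all x ∈ G. Then for every x ∈ G with f(x) ≠ 0, every prime divisor l of the order of x satisfies l ≤ d or l = p. -/
/-!
Let `F χ = ∑ y, f y * χ y` be the Fourier transform of `f`. From `f ⋆ f = d • f` we get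
`F ^ 2 = d • F`, so `F` only takes the values `0` and `d`. Let `ψ` be a character of order `m`
prime to `p * d`. Summing `F` over the coset `χ ⟨ψ⟩` gives `m * w = N * d`, where `N` counts the
points of the coset at which `F = d` and `p ^ K * w` is an algebraic integer; hence `m ∣ N`, so
`F` is constant on the coset. Thus `F (χ * ψ) = F χ`, and Fourier inversion gives `ψ * f = f`:
`f` vanishes off `ker ψ`. If a prime `l > d`, `l ≠ p` divides the order of `x`, the `l`-part of a
character that is nontrivial on the element of order `l` in `⟨x⟩` is such a `ψ` with `ψ x ≠ 1`.
-/

open Finset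

theorem exists_pow_mul_isIntegral_forall {ι A : Type*} [Finite ι] [CommRing A] {p : ℕ}
    {v : ι → A} (hv : ∀ i, ∃ k : ℕ, IsIntegral ℤ ((p : A) ^ k * v i)) :
    ∃ K : ℕ, ∀ i, IsIntegral ℤ ((p : A) ^ K * v i) := by
  choose k hk using hv
  obtain ⟨K, hK⟩ := Finite.exists_le k
  refine ⟨K, fun i => ?_⟩
  rw [← Nat.sub_add_cancel (hK i), pow_add, mul_assoc]
  exact ((isIntegral_natCast p).pow _).mul (hk i)

theorem Nat.dvd_of_mul_eq_of_isIntegral {K : Type*} [Field K] [CharZero K] {a b : ℕ} {w : K}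
    (hw : IsIntegral ℤ w) (h : (b : K) * w = a) : b ∣ a := by
  rcases eq_or_ne b 0 with rfl | hb
  · simpa [eq_comm] using h
  have hw' : algebraMap ℚ K ((a : ℚ) / b) = w := by
    rw [map_div₀, map_natCast, map_natCast, ← h, mul_div_cancel_left₀ _ (Nat.cast_ne_zero.2 hb)]
  rw [← hw', isIntegral_algebraMap_iff (algebraMap ℚ K).injective,
    IsIntegrallyClosed.isIntegral_iff] at hw
  obtain ⟨m, hm⟩ := hw
  rw [algebraMap_int_eq, eq_intCast, eq_div_iff (Nat.cast_ne_zero.2 hb)] at hm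
  exact Int.natCast_dvd_natCast.1 ⟨m, by exact_mod_cast hm.symm.trans (mul_comm _ _)⟩

theorem Finset.sum_eq_card_filter_mul_of_forall_eq_zero_or_eq {ι R : Type*} [Semiring R]
    [DecidableEq R] {s : Finset ι} {g : ι → R} {c : R} (h : ∀ i ∈ s, g i = 0 ∨ g i = c) :
    ∑ i ∈ s, g i = #{i ∈ s | g i = c} * c := by
  calc ∑ i ∈ s, g i = ∑ i ∈ s, if g i = c then c else 0 :=
        sum_congr rfl fun i hi => by rcases h i hi with h | h <;> simp [h]
    _ = #{i ∈ s | g i = c} * c := by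
        rw [sum_ite, sum_const, sum_const_zero, add_zero, nsmul_eq_mul]

theorem AddChar.isIntegral_apply {G R : Type*} [AddGroup G] [Finite G] [CommRing R]
    (χ : AddChar G R) (y : G) : IsIntegral ℤ (χ y) := by
  refine IsIntegral.of_pow (addOrderOf_pos y) ?_
  rw [← AddChar.map_nsmul_eq_pow, addOrderOf_nsmul_eq_zero, AddChar.map_zero_eq_one]
  exact isIntegral_one

section FiniteAbelianGroup

variable {G : Type*} [AddCommGroup G] [Fintype G]

noncomputable def addConv (f g : G → ℂ) (x : G) : ℂ := ∑ y, f (x - y) * g y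

noncomputable def charTransform (f : G → ℂ) (χ : AddChar G ℂ) : ℂ := ∑ y, f y * χ y

theorem charTransform_addConv (f g : G → ℂ) (χ : AddChar G ℂ) :
    charTransform (addConv f g) χ = charTransform f χ * charTransform g χ := by
  rw [charTransform, charTransform, charTransform, sum_mul_sum, sum_comm]
  simp only [addConv, sum_mul]
  rw [sum_comm]
  refine sum_congr rfl fun y _ => (Fintype.sum_equiv (Equiv.addRight y) _ _ fun x => ?_).symm
  simp only [Equiv.coe_addRight, add_sub_cancel_right, AddChar.map_add_eq_mul]
  ring

theorem charTransform_mul_addChar (f : G → ℂ) (ψ χ : AddChar G ℂ) :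
    charTransform (⇑ψ * f) χ = charTransform f (χ * ψ) := by
  simp only [charTransform, Pi.mul_apply, AddChar.mul_apply]
  exact sum_congr rfl fun y _ => by ring

theorem sum_charTransform_mul_apply_neg (f : G → ℂ) (x : G) :
    ∑ χ : AddChar G ℂ, charTransform f χ * χ (-x) = Fintype.card (AddChar G ℂ) * f x := by
  classical
  simp only [charTransform, sum_mul, mul_assoc, ← AddChar.map_add_eq_mul]
  rw [sum_comm]
  simp only [← mul_sum, ← sub_eq_add_neg, AddChar.sum_apply_eq_ite, sub_eq_zero]
  simp [mul_comm]

theorem charTransform_injective : Function.Injective (charTransform : (G → ℂ) → _ → ℂ) := by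
  intro f g hfg
  funext x
  have key := sum_charTransform_mul_apply_neg f x
  rw [hfg, sum_charTransform_mul_apply_neg] at key
  exact mul_left_cancel₀ (Nat.cast_ne_zero.2 Fintype.card_ne_zero) key.symm

theorem charTransform_eq_zero_or_eq_of_addConv_self {f : G → ℂ} {d : ℂ}
    (hf : ∀ x, addConv f f x = d * f x) (χ : AddChar G ℂ) :
    charTransform f χ = 0 ∨ charTransform f χ = d := by
  have hsq : charTransform f χ * charTransform f χ = d * charTransform f χ := by
    rw [← charTransform_addConv, charTransform, charTransform, mul_sum]
    exact sum_congr rfl fun y _ => by rw [hf, mul_assoc]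
  rwa [← sub_eq_zero, ← sub_mul, mul_eq_zero, sub_eq_zero, or_comm] at hsq

theorem sum_range_charTransform_mul_pow {ψ : AddChar G ℂ} {m : ℕ} (hψ : ψ ^ m = 1)
    (f : G → ℂ) (χ : AddChar G ℂ) :
    ∑ j ∈ range m, charTransform f (χ * ψ ^ j) = m * ∑ y with ψ y = 1, f y * χ y := by
  have hψm (y : G) : ψ y ^ m = 1 := by rw [← AddChar.pow_apply, hψ, AddChar.one_apply]
  simp only [charTransform, AddChar.mul_apply, AddChar.pow_apply]
  rw [sum_comm, sum_filter, mul_sum]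
  refine sum_congr rfl fun y _ => ?_
  simp only [← mul_assoc, ← mul_sum]
  split_ifs with hy
  · simp [hy, mul_comm]
  · rw [geom_sum_eq hy, hψm, sub_self, zero_div, mul_zero, mul_zero]

theorem charTransform_mul_eq_of_coprime {f : G → ℂ} {q d : ℕ}
    (hq : ∀ y, IsIntegral ℤ ((q : ℂ) * f y))
    (hF : ∀ χ, charTransform f χ = 0 ∨ charTransform f χ = d)
    {ψ : AddChar G ℂ} (hψ : (orderOf ψ).Coprime (q * d)) (χ : AddChar G ℂ) :
    charTransform f (χ * ψ) = charTransform f χ := by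
  set g : ℕ → ℂ := fun j => charTransform f (χ * ψ ^ j)
  set N := #{j ∈ range (orderOf ψ) | g j = d}
  set w := ∑ y with ψ y = 1, f y * χ y
  have hmw : (orderOf ψ : ℂ) * w = N * d := by
    rw [← sum_range_charTransform_mul_pow (pow_orderOf_eq_one ψ),
      sum_eq_card_filter_mul_of_forall_eq_zero_or_eq fun j _ => hF _]
  have hqw : IsIntegral ℤ ((q : ℂ) * w) := by
    rw [mul_sum]
    refine IsIntegral.sum _ fun y _ => ?_
    rw [← mul_assoc]
    exact (hq y).mul (χ.isIntegral_apply y)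
  have hmN : orderOf ψ ∣ N := hψ.dvd_of_dvd_mul_left <|
    Nat.dvd_of_mul_eq_of_isIntegral hqw (by push_cast; linear_combination (q : ℂ) * hmw)
  have hN : N ≤ orderOf ψ := (card_filter_le _ _).trans_eq (card_range _)
  have hvals : (∀ j ∈ range (orderOf ψ), g j = 0) ∨ ∀ j ∈ range (orderOf ψ), g j = d := by
    rcases hN.lt_or_eq with hlt | heq
    · have hne := card_filter_eq_zero_iff.1 (Nat.eq_zero_of_dvd_of_lt hmN hlt)
      exact .inl fun j hj => (hF _).resolve_right (hne j hj)
    · exact .inr <| card_filter_eq_iff.1 (heq.trans (card_range _).symm)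
  have hconst : ∀ j ∈ range (orderOf ψ), g j = g 0 := by
    have h0 := mem_range.2 (orderOf_pos ψ)
    rcases hvals with hg | hg <;> exact fun j hj => (hg j hj).trans (hg 0 h0).symm
  have h1 := hconst (1 % orderOf ψ) (mem_range.2 (Nat.mod_lt 1 (orderOf_pos ψ)))
  simpa [g, pow_mod_orderOf] using h1

theorem apply_eq_one_of_charTransform_mul_eq {f : G → ℂ} {ψ : AddChar G ℂ}
    (h : ∀ χ, charTransform f (χ * ψ) = charTransform f χ) {x : G} (hx : f x ≠ 0) :
    ψ x = 1 := by
  have hψf : ⇑ψ * f = f := charTransform_injective <| funext fun χ => by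
    rw [charTransform_mul_addChar, h]
  exact (mul_eq_right₀ hx).1 (congr_fun hψf x)

theorem AddChar.exists_pow_prime_pow_eq_one_apply_ne_one {l : ℕ} (hl : l.Prime) {x : G}
    (hlx : l ∣ addOrderOf x) : ∃ ψ : AddChar G ℂ, ∃ M : ℕ, ψ ^ l ^ M = 1 ∧ ψ x ≠ 1 := by
  have := Fact.mk hl
  set z := (addOrderOf x / l) • x
  have hz : addOrderOf z = l := addOrderOf_nsmul_addOrderOf_sub (addOrderOf_pos x).ne' hlx
  obtain ⟨χ, hχ⟩ := (AddChar.exists_apply_ne_zero (a := z)).2 fun h =>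
    hl.one_lt.ne' (by rw [← hz, h, addOrderOf_zero])
  have hχz : orderOf (χ z) = l := orderOf_eq_prime
    (by rw [← AddChar.map_nsmul_eq_pow, ← hz, addOrderOf_nsmul_eq_zero, AddChar.map_zero_eq_one]) hχ
  set c := ordCompl[l] (orderOf χ)
  refine ⟨χ ^ c, (orderOf χ).factorization l, ?_, fun h => ?_⟩
  · rw [← pow_mul, mul_comm, Nat.ordProj_mul_ordCompl_eq_self, pow_orderOf_eq_one]
  · have hχzc : χ z ^ c = 1 := by
      rw [← AddChar.pow_apply, AddChar.map_nsmul_eq_pow, h, one_pow]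
    have hlc := orderOf_dvd_of_pow_eq_one hχzc
    rw [hχz] at hlc
    exact Nat.not_dvd_ordCompl hl (orderOf_pos χ).ne' hlc

end FiniteAbelianGroup

/-- If `f : G → ℂ` on a finite abelian group has values integral over `ℤ[1/p]`
and satisfies the convolution identity `f ⋆ f = d • f`, then every point of the
support of `f` has order whose prime divisors are all `≤ d` or equal to `p`. -/
theorem support_of_convolution_idempotent_in_pd_torsion
    (G : Type*) [AddCommGroup G] [Fintype G]
    (p : ℕ) (hp : p.Prime) (d : ℕ) (hd : 0 < d)
    (f : G → ℂ)
    (hint : ∀ x : G, ∃ k : ℕ, IsIntegral ℤ ((p : ℂ) ^ k * f x))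
    (hconv : ∀ x : G, (∑ y : G, f (x - y) * f y) = (d : ℂ) * f x) :
    ∀ x : G, f x ≠ 0 → ∀ l : ℕ, l.Prime → l ∣ addOrderOf x → l ≤ d ∨ l = p := by
  intro x hfx l hl hlx
  by_contra! hld
  obtain ⟨ψ, M, hψ, hψx⟩ := AddChar.exists_pow_prime_pow_eq_one_apply_ne_one hl hlx
  obtain ⟨K, hK⟩ := exists_pow_mul_isIntegral_forall hint
  have hlpd : l.Coprime (p ^ K * d) :=
    .mul_right (.pow_right K ((Nat.coprime_primes hl hp).2 hld.2))
      (hl.coprime_iff_not_dvd.2 fun h => hld.1.not_ge (Nat.le_of_dvd hd h))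
  have hψpd : (orderOf ψ).Coprime (p ^ K * d) :=
    (hlpd.pow_left M).coprime_dvd_left (orderOf_dvd_of_pow_eq_one hψ)
  refine hψx (apply_eq_one_of_charTransform_mul_eq (fun χ => ?_) hfx)
  exact charTransform_mul_eq_of_coprime (q := p ^ K) (by exact_mod_cast hK)
    (charTransform_eq_zero_or_eq_of_addConv_self hconv) hψpd χ
end

section
/- Let R be a commutative ring, 𝔭 ⊂ R a prime ideal containing a prime number l (i.e., l·1_R ∈ 𝔭), G a finite abelian group (written additively), f : G → R a function, and χ, χ' : G → Rˣ two characters such that the character χ'·χ⁻¹ has l-power order (equivalently, (χ'·χ⁻¹)(x)^{l^r} = 1 for all x ∈ G, for some r). Then ∑_{x∈G} f(x)·χ'(−x) ≡ ∑_{x∈G} f(x)·χ(−x) modulo 𝔭. -/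
/-!
Modulo `𝔭` we are in a domain of characteristic `l`, where `u ↦ u ^ l ^ r` is injective
(Frobenius), so every `l`-power root of unity is `≡ 1`. Hence `χ' ≡ χ` pointwise and the two
Fourier sums agree term by term.
-/

namespace Ideal

variable {R : Type*} [CommRing R] {𝔭 : Ideal R}

theorem sub_one_mem_of_pow_prime_pow_eq_one [𝔭.IsPrime] {p : ℕ} (hp : p.Prime)
    (hp𝔭 : (p : R) ∈ 𝔭) {r : ℕ} {u : R} (hu : u ^ p ^ r = 1) : u - 1 ∈ 𝔭 := by
  have : CharP (R ⧸ 𝔭) p :=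
    (CharP.charP_iff_prime_eq_zero hp).2 (by simpa using Quotient.eq_zero_iff_mem.2 hp𝔭)
  have : ExpChar (R ⧸ 𝔭) p := .prime hp
  rw [← Quotient.eq_zero_iff_mem, map_sub, map_one]
  refine pow_eq_zero_iff (pow_ne_zero r hp.ne_zero) |>.1 ?_
  rw [sub_pow_expChar_pow, ← map_pow, hu, map_one, one_pow, sub_self]

theorem val_sub_val_mem_of_mul_inv_pow_prime_pow_eq_one [𝔭.IsPrime] {p : ℕ} (hp : p.Prime)
    (hp𝔭 : (p : R) ∈ 𝔭) {r : ℕ} {a b : Rˣ} (hab : (a * b⁻¹) ^ p ^ r = 1) :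
    (a - b : R) ∈ 𝔭 := by
  have hu : ((a * b⁻¹ : Rˣ) : R) ^ p ^ r = 1 := by
    rw [← Units.val_pow_eq_pow_val, hab, Units.val_one]
  have : (a - b : R) = ((a * b⁻¹ : Rˣ) - 1 : R) * b := by simp [sub_mul]
  rw [this]
  exact mul_mem_right _ _ (sub_one_mem_of_pow_prime_pow_eq_one hp hp𝔭 hu)

theorem sum_mul_sub_sum_mul_mem {ι : Type*} (s : Finset ι) (f g h : ι → R)
    (hgh : ∀ i ∈ s, g i - h i ∈ 𝔭) :
    ∑ i ∈ s, f i * g i - ∑ i ∈ s, f i * h i ∈ 𝔭 := by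
  rw [← Finset.sum_sub_distrib]
  exact sum_mem _ fun i hi ↦ mul_sub (f i) (g i) (h i) ▸ mul_mem_left _ _ (hgh i hi)

end Ideal

/-- If two characters `χ', χ` of a finite abelian group `G` with values in `Rˣ`
differ by a character of `l`-power order, then the Fourier coefficients
`∑ x, f x * χ' (-x)` and `∑ x, f x * χ (-x)` of any `f : G → R` are congruent
modulo any prime ideal `𝔭` containing the prime `l`. -/
theorem fourier_coeff_congruent_mod_prime_of_lpow_twist
    (R : Type*) [CommRing R] (𝔭 : Ideal R) (h𝔭 : 𝔭.IsPrime)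
    (l : ℕ) (hl : l.Prime) (hl𝔭 : (l : R) ∈ 𝔭)
    (G : Type*) [AddCommGroup G] [Fintype G]
    (f : G → R) (χ χ' : AddChar G Rˣ)
    (htwist : ∃ r : ℕ, ∀ x : G, (χ' x * (χ x)⁻¹) ^ l ^ r = 1) :
    (∑ x : G, f x * (χ' (-x) : R)) - (∑ x : G, f x * (χ (-x) : R)) ∈ 𝔭 := by
  obtain ⟨r, hr⟩ := htwist
  exact Ideal.sum_mul_sub_sum_mul_mem _ _ _ _ fun x _ ↦
    Ideal.val_sub_val_mem_of_mul_inv_pow_prime_pow_eq_one hl hl𝔭 (hr (-x))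
end

section
/- Let a ≥ 1 be an integer and let p, q ∈ ℚ[x,x⁻¹] be Laurent polynomials such that every monomial of p has degree in the interval [1−a, a−1], the value of q at x = −1 is nonzero, and the product p·q is divisible by (x+1)^{2a} in ℚ[x,x⁻¹]. Then p = 0. -/
/-!
Multiplying by powers of `T` turns `p` into a polynomial `P` of degree `< 2a` and `q` into a
polynomial `Q` with `Q(-1) ≠ 0`. As `T` is a unit, the divisibility descends to `ℚ[X]` up to a
power of `X`; since `X + 1` is prime and divides neither `Q` nor `X`, it gives `(X + 1)^{2a} ∣ P`,
which forces `P = 0` by degree.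
-/

open LaurentPolynomial

namespace LaurentPolynomial

open Polynomial

section Semiring

variable {R : Type*} [Semiring R]

lemma coeff_mul_T (f : R[T;T⁻¹]) (k n : ℤ) : (f * T k).coeff n = f.coeff (n - k) := by
  simpa [sub_eq_add_neg] using AddMonoidAlgebra.coeff_mul_single_apply f (1 : R) k n

lemma coeff_toLaurent_natCast (P : R[X]) (k : ℕ) : (toLaurent P).coeff k = P.coeff k := by
  rw [toLaurent_apply]
  exact Finsupp.mapDomain_apply Nat.cast_injective _ _

lemma coeff_toLaurent_of_neg (P : R[X]) {n : ℤ} (hn : n < 0) : (toLaurent P).coeff n = 0 := by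
  rw [toLaurent_apply]
  exact Finsupp.mapDomain_of_notMem_range _ _ (by rintro ⟨k, rfl⟩; omega)

lemma coeff_trunc (f : R[T;T⁻¹]) (k : ℕ) : (trunc f).coeff k = f.coeff k := rfl

lemma toLaurent_trunc_eq_of_coeff_neg_eq_zero {f : R[T;T⁻¹]} (hf : ∀ n < 0, f.coeff n = 0) :
    toLaurent (trunc f) = f := by
  ext n
  rcases lt_or_ge n 0 with hn | hn
  · rw [coeff_toLaurent_of_neg _ hn, hf n hn]
  · lift n to ℕ using hn
    rw [coeff_toLaurent_natCast, coeff_trunc]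

lemma exists_toLaurent_eq_of_coeff_ne_zero {f : R[T;T⁻¹]} {d : ℕ}
    (hf : ∀ n, f.coeff n ≠ 0 → 0 ≤ n ∧ n < d) :
    ∃ P : R[X], P.degree < d ∧ toLaurent P = f := by
  refine ⟨trunc f, (degree_lt_iff_coeff_zero _ _).2 fun k hk => ?_,
    toLaurent_trunc_eq_of_coeff_neg_eq_zero fun n hn => ?_⟩
  · rw [coeff_trunc]
    by_contra h
    have := (hf k h).2
    omega
  · by_contra h
    have := (hf n h).1
    omega

end Semiring

lemma exists_dvd_mul_X_pow_of_toLaurent_dvd {R : Type*} [CommSemiring R] {F G : R[X]}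
    (h : toLaurent F ∣ toLaurent G) : ∃ m : ℕ, F ∣ G * X ^ m := by
  obtain ⟨c, hc⟩ := h
  obtain ⟨m, C', hC'⟩ := exists_T_pow c
  refine ⟨m, C', toLaurent_injective ?_⟩
  rw [map_mul, map_mul, toLaurent_X_pow, hC', hc, mul_assoc]

lemma eval₂_id_eq_smeval {R : Type*} [CommSemiring R] (x : Rˣ) (f : R[T;T⁻¹]) :
    eval₂ (RingHom.id R) x f = f.smeval x := by
  induction f using LaurentPolynomial.induction_on' with
  | add f g hf hg => rw [map_add, smeval_add, hf, hg]
  | C_mul_T n r => rw [eval₂_C_mul_T, smeval_C_mul_T_n, RingHom.id_apply, smul_eq_mul]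

lemma smeval_eq_sum_mul_zpow {K : Type*} [DivisionRing K] (x : Kˣ) (f : K[T;T⁻¹]) :
    f.smeval x = f.coeff.sum fun n c => c * (x : K) ^ n := by
  simp only [smeval_eq_sum, smul_eq_mul, Units.val_zpow_eq_zpow_val]

end LaurentPolynomial

namespace Polynomial

lemma pow_X_sub_C_dvd_of_dvd_mul {R : Type*} [CommRing R] [IsDomain R] {r : R} {k : ℕ}
    {P Q : R[X]} (h : (X - C r) ^ k ∣ P * Q) (hQ : Q.eval r ≠ 0) : (X - C r) ^ k ∣ P :=
  (prime_X_sub_C r).pow_dvd_of_dvd_mul_right k (by rwa [dvd_iff_isRoot]) h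

end Polynomial

open Polynomial in
theorem laurent_eq_zero_of_mul_dvd_by_pow_general
    (a : ℕ) (p q : LaurentPolynomial ℚ)
    (hsupp : ∀ n : ℤ, p.coeff n ≠ 0 → 1 - (a : ℤ) ≤ n ∧ n ≤ (a : ℤ) - 1)
    (hq : (Finsupp.sum q.coeff fun n c => c * (-1 : ℚ) ^ n) ≠ 0)
    (hdvd : ((T 1 : LaurentPolynomial ℚ) + 1) ^ (2 * a) ∣ p * q) :
    p = 0 := by
  obtain ⟨P, hPdeg, hP⟩ : ∃ P : ℚ[X], P.degree < ↑(2 * a) ∧ toLaurent P = p * T (a - 1) := by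
    refine exists_toLaurent_eq_of_coeff_ne_zero fun n hn => ?_
    rw [coeff_mul_T] at hn
    have := hsupp _ hn
    omega
  obtain ⟨n, Q, hQ⟩ := exists_T_pow q
  have hQ_eval : Q.eval (-1) ≠ 0 := by
    have := congrArg (LaurentPolynomial.eval₂ (RingHom.id ℚ) (-1)) hQ
    rw [eval₂_toLaurent, ← Polynomial.eval, map_mul, eval₂_T, eval₂_id_eq_smeval,
      smeval_eq_sum_mul_zpow, Units.val_neg, Units.val_one] at this
    exact this ▸ mul_ne_zero hq (by simp)
  obtain ⟨m, hm⟩ : ∃ m : ℕ, (X - Polynomial.C (-1)) ^ (2 * a) ∣ P * Q * X ^ m := by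
    apply exists_dvd_mul_X_pow_of_toLaurent_dvd
    rw [map_mul, hP, hQ, map_pow, map_sub, toLaurent_X, toLaurent_C, map_neg, map_one,
      sub_neg_eq_add, mul_mul_mul_comm]
    exact dvd_mul_of_dvd_left hdvd _
  have hdvdP : (X - Polynomial.C (-1)) ^ (2 * a) ∣ P :=
    pow_X_sub_C_dvd_of_dvd_mul (by rwa [mul_assoc] at hm) (by simpa using hQ_eval)
  have hP0 : P = 0 :=
    eq_zero_of_dvd_of_degree_lt hdvdP (by rwa [degree_pow, degree_X_sub_C, nsmul_one])
  simpa [hP0, (isUnit_T _).mul_left_eq_zero] using hP.symm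

/-- If a Laurent polynomial `p` over `ℚ` has all monomial degrees in `[1-a, a-1]`,
`q` has nonzero value at `x = -1`, and `(x+1)^{2a}` divides `p * q`, then `p = 0`. -/
theorem laurent_eq_zero_of_mul_dvd_by_pow
    (a : ℕ) (ha : 1 ≤ a) (p q : LaurentPolynomial ℚ)
    (hsupp : ∀ n : ℤ, p.coeff n ≠ 0 → 1 - (a : ℤ) ≤ n ∧ n ≤ (a : ℤ) - 1)
    (hq : (Finsupp.sum q.coeff fun n c => c * (-1 : ℚ) ^ n) ≠ 0)
    (hdvd : ((T 1 : LaurentPolynomial ℚ) + 1) ^ (2 * a) ∣ p * q) :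
    p = 0 :=
  laurent_eq_zero_of_mul_dvd_by_pow_general a p q hsupp hq hdvd
end

section
/- Let Γ be a linearly ordered abelian group (a linearly ordered set with a compatible abelian group structure). Let A, B, C be finite multisets of elements of Γ with C nonempty. If the multiset {a + c : a ∈ A, c ∈ C} (counted with multiplicities) equals the multiset {b + c : b ∈ B, c ∈ C}, then A = B. -/
/-!
Induct on `A`. Take maxima `a`, `b`, `c` of `A`, `B`, `C`. Every element of the sum multiset
of `B` and `C` is at most `b + c`, and `a + c` is one of them, so `a ≤ b`; symmetrically `b ≤ a`.
Removing `a` from `A` and `B` removes the same copy of `C` translated by `a` from both sums,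
and the induction hypothesis applies to what is left.
-/

def sumMultiset {Γ : Type*} [Add Γ] (A C : Multiset Γ) : Multiset Γ :=
  A.bind fun a => C.map fun c => a + c

section

variable {Γ : Type*}

theorem sumMultiset_cons [Add Γ] (a : Γ) (A C : Multiset Γ) :
    sumMultiset (a ::ₘ A) C = C.map (fun c => a + c) + sumMultiset A C :=
  Multiset.cons_bind _ _ _

theorem add_mem_sumMultiset [Add Γ] {A C : Multiset Γ} {a c : Γ} (ha : a ∈ A) (hc : c ∈ C) :
    a + c ∈ sumMultiset A C :=
  Multiset.mem_bind.mpr ⟨a, ha, Multiset.mem_map_of_mem _ hc⟩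

theorem sumMultiset_eq_zero [Add Γ] {A C : Multiset Γ} (hC : C ≠ 0) :
    sumMultiset A C = 0 ↔ A = 0 := by
  refine ⟨fun h => ?_, fun h => h ▸ Multiset.zero_bind _⟩
  obtain ⟨c, hc⟩ := Multiset.exists_mem_of_ne_zero hC
  refine Multiset.eq_zero_of_forall_notMem fun a ha => ?_
  simpa [h] using add_mem_sumMultiset ha hc

theorem le_add_of_mem_sumMultiset [AddCommMonoid Γ] [PartialOrder Γ] [IsOrderedAddMonoid Γ]
    {A C : Multiset Γ} {a c x : Γ} (hA : ∀ y ∈ A, y ≤ a) (hC : ∀ z ∈ C, z ≤ c)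
    (hx : x ∈ sumMultiset A C) : x ≤ a + c := by
  obtain ⟨y, hy, hx⟩ := Multiset.mem_bind.mp hx
  obtain ⟨z, hz, rfl⟩ := Multiset.mem_map.mp hx
  exact add_le_add (hA y hy) (hC z hz)

variable [AddCommMonoid Γ] [LinearOrder Γ] [IsOrderedCancelAddMonoid Γ]

theorem max_eq_of_sumMultiset_eq {A B C : Multiset Γ} (h : sumMultiset A C = sumMultiset B C)
    {a b c : Γ} (ha : a ∈ A) (hA : ∀ x ∈ A, x ≤ a) (hb : b ∈ B) (hB : ∀ x ∈ B, x ≤ b)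
    (hc : c ∈ C) (hC : ∀ z ∈ C, z ≤ c) : a = b := by
  have hab : a + c ≤ b + c := le_add_of_mem_sumMultiset hB hC (h ▸ add_mem_sumMultiset ha hc)
  have hba : b + c ≤ a + c := le_add_of_mem_sumMultiset hA hC (h ▸ add_mem_sumMultiset hb hc)
  exact le_antisymm (le_of_add_le_add_right hab) (le_of_add_le_add_right hba)

theorem sumMultiset_right_cancel {A B C : Multiset Γ} (hC : C ≠ 0)
    (h : sumMultiset A C = sumMultiset B C) : A = B := by
  induction A using Multiset.strongInductionOn generalizing B with
  | ih A IH =>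
  have hAB : A = 0 ↔ B = 0 := by
    rw [← sumMultiset_eq_zero hC, h, sumMultiset_eq_zero hC]
  obtain rfl | hA := eq_or_ne A 0
  · exact (hAB.mp rfl).symm
  have hB : B ≠ 0 := mt hAB.mpr hA
  obtain ⟨a, ha, hAmax⟩ := Multiset.exists_max_image id hA
  obtain ⟨b, hb, hBmax⟩ := Multiset.exists_max_image id hB
  obtain ⟨c, hc, hCmax⟩ := Multiset.exists_max_image id hC
  obtain rfl : a = b := max_eq_of_sumMultiset_eq h ha hAmax hb hBmax hc hCmax
  rw [← Multiset.cons_erase ha, ← Multiset.cons_erase hb, sumMultiset_cons,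
    sumMultiset_cons] at h
  rw [← Multiset.cons_erase ha, ← Multiset.cons_erase hb,
    IH _ (Multiset.erase_lt.mpr ha) (add_left_cancel h)]

end

/-- Cancellation of sum multisets in a linearly ordered abelian group: if
`A + C = B + C` as multisets (elementwise sums with multiplicity) and `C` is
nonempty, then `A = B`. -/
theorem multiset_add_cancel_of_sum_multiset_eq
    (Γ : Type*) [AddCommGroup Γ] [LinearOrder Γ] [IsOrderedAddMonoid Γ]
    (A B C : Multiset Γ) (hC : C ≠ 0)
    (h : (A.bind fun a => C.map fun c => a + c) = (B.bind fun b => C.map fun c => b + c)) :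
    A = B :=
  sumMultiset_right_cancel hC h
end

section
/- Let k be an algebraically closed field, G a group, and N ◁ G a normal subgroup with G/N finite cyclic. Let V be a finite-dimensional k-vector space and ρ : N → GL(V) an irreducible representation such that for every g ∈ G the conjugate representation n ↦ ρ(g·n·g⁻¹) is isomorphic to ρ. Then ρ extends to a representation ρ' : G → GL(V) with ρ'|_N = ρ. -/
/-!
Choose `g ∈ G` whose class generates `G ⧸ N` and an isomorphism `T` from `ρ` to its conjugate by
`g`, and let `m` be the order of `gN`. Then `ρ(gᵐ)⁻¹ Tᵐ` commutes with `ρ(N)`, so by Schur's lemma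
it is a nonzero scalar `c`; as `k` is algebraically closed, `c` has an `m`-th root, and rescaling
`T` by its inverse gives `Tᵐ = ρ(gᵐ)`. Now `ρ` and `j ↦ Tʲ` define a homomorphism on `N ⋊ ℤ`,
where `ℤ` acts by conjugation by `g`, and `Tᵐ = ρ(gᵐ)` says exactly that it kills the kernel of
the surjection `(n, j) ↦ n gʲ` onto `G`.
-/

open LinearMap (GeneralLinearGroup)

theorem MonoidHom.map_zpow_apply_eq_conj {N U : Type*} [Group N] [Group U] (ρ : N →* U)
    {σ : MulAut N} {T : U} (h : ∀ n, ρ (σ n) = T * ρ n * T⁻¹) (j : ℤ) (n : N) :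
    ρ ((σ ^ j) n) = T ^ j * ρ n * (T ^ j)⁻¹ := by
  induction j using Int.induction_on generalizing n with
  | zero => simp
  | succ j ih => rw [zpow_add_one, MulAut.mul_apply, ih, h, zpow_add_one]; group
  | pred j ih =>
    have h_inv : ρ (σ⁻¹ n) = T⁻¹ * ρ n * T := by
      have := h (σ⁻¹ n)
      rw [MulAut.apply_inv_self] at this
      rw [this]; group
    rw [zpow_sub_one, MulAut.mul_apply, ih, h_inv, zpow_sub_one]; group

section Schur

variable {k V : Type*} [Field k] [IsAlgClosed k] [AddCommGroup V] [Module k V]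
  [FiniteDimensional k V]

theorem Module.End.exists_eq_algebraMap_of_forall_commute {ι : Type*} [Nontrivial V]
    (A : ι → Module.End k V)
    (hirr : ∀ W : Submodule k V, (∀ i, ∀ v ∈ W, A i v ∈ W) → W = ⊥ ∨ W = ⊤)
    {f : Module.End k V} (hf : ∀ i, Commute f (A i)) : ∃ μ : k, f = algebraMap k _ μ := by
  obtain ⟨μ, hμ⟩ := f.exists_eigenvalue
  have htop : f.eigenspace μ = ⊤ :=
    (hirr _ fun i => Module.End.mapsTo_genEigenspace_of_comm (hf i) μ 1).resolve_left hμ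
  refine ⟨μ, LinearMap.ext fun v => ?_⟩
  exact Module.End.mem_eigenspace_iff.mp (htop ▸ Submodule.mem_top)

theorem LinearMap.GeneralLinearGroup.exists_eq_map_algebraMap_of_forall_commute {ι : Type*}
    (A : ι → Module.End k V)
    (hirr : ∀ W : Submodule k V, (∀ i, ∀ v ∈ W, A i v ∈ W) → W = ⊥ ∨ W = ⊤)
    {S : GeneralLinearGroup k V} (hS : ∀ i, Commute (S : Module.End k V) (A i)) :
    ∃ c : kˣ, S = Units.map (algebraMap k (Module.End k V)).toMonoidHom c := by
  cases subsingleton_or_nontrivial V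
  · exact ⟨1, Subsingleton.elim _ _⟩
  obtain ⟨μ, hμ⟩ := Module.End.exists_eq_algebraMap_of_forall_commute A hirr hS
  have hμ0 : μ ≠ 0 := by
    rintro rfl
    simpa [hμ] using S.isUnit
  exact ⟨Units.mk0 μ hμ0, Units.ext hμ⟩

theorem exists_conj_eq_and_pow_eq_of_irreducible {N : Type*} [Group N]
    (ρ : N →* GeneralLinearGroup k V)
    (hirr : ∀ W : Submodule k V,
      (∀ n : N, ∀ v ∈ W, (ρ n : V →ₗ[k] V) v ∈ W) → W = ⊥ ∨ W = ⊤)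
    {σ : MulAut N} {T : GeneralLinearGroup k V} (hT : ∀ n, ρ (σ n) = T * ρ n * T⁻¹)
    {m : ℕ} (hm : 0 < m) {n₀ : N} (hσ : σ ^ m = MulAut.conj n₀) :
    ∃ T' : GeneralLinearGroup k V, (∀ n, ρ (σ n) = T' * ρ n * T'⁻¹) ∧ T' ^ m = ρ n₀ := by
  set scalar := Units.map (algebraMap k (Module.End k V)).toMonoidHom
  have scalar_comm : ∀ c u, Commute (scalar c) u := fun c u =>
    Units.ext (Algebra.commutes (c : k) (u : Module.End k V))
  have hTm : ∀ n, ρ n₀ * ρ n * (ρ n₀)⁻¹ = T ^ m * ρ n * (T ^ m)⁻¹ := fun n => by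
    have := ρ.map_zpow_apply_eq_conj hT m n
    rwa [zpow_natCast, zpow_natCast, hσ, MulAut.conj_apply, map_mul, map_mul, map_inv] at this
  obtain ⟨c, hc⟩ := LinearMap.GeneralLinearGroup.exists_eq_map_algebraMap_of_forall_commute
    (fun n => (ρ n : Module.End k V)) hirr (S := (ρ n₀)⁻¹ * T ^ m) fun n => by
      refine Commute.units_val ?_
      calc (ρ n₀)⁻¹ * T ^ m * ρ n = (ρ n₀)⁻¹ * (T ^ m * ρ n * (T ^ m)⁻¹) * T ^ m := by group
        _ = (ρ n₀)⁻¹ * (ρ n₀ * ρ n * (ρ n₀)⁻¹) * T ^ m := by rw [hTm]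
        _ = ρ n * ((ρ n₀)⁻¹ * T ^ m) := by group
  obtain ⟨l, hl⟩ := IsAlgClosed.exists_pow_nat_eq (c⁻¹ : kˣ).val hm
  have hl0 : l ≠ 0 := by
    rintro rfl
    exact c⁻¹.ne_zero (by rw [← hl, zero_pow hm.ne'])
  set d := Units.mk0 l hl0
  have hdm : d ^ m = c⁻¹ := Units.ext (by simpa [d] using hl)
  refine ⟨scalar d * T, fun n => ?_, ?_⟩
  · rw [hT, mul_inv_rev, ← (scalar_comm d _).mul_inv_cancel (b := T * ρ n * T⁻¹)]
    group
  · rw [(scalar_comm _ _).mul_pow, ← map_pow, hdm, inv_mul_eq_iff_eq_mul.mp hc, map_inv,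
      ← mul_assoc, (scalar_comm c _).inv_mul_cancel]

end Schur

theorem QuotientGroup.pow_orderOf_mk_mem {G : Type*} [Group G] (N : Subgroup G) [N.Normal]
    (g : G) : g ^ orderOf (g : G ⧸ N) ∈ N := by
  rw [← QuotientGroup.eq_one_iff, QuotientGroup.mk_pow, pow_orderOf_eq_one]

section CyclicExtension

variable {G U : Type*} [Group G] [Group U] {N : Subgroup G} [N.Normal]

theorem MonoidHom.zpow_eq_of_pow_orderOf_mk_eq (ρ : N →* U) {g : G} {T : U}
    (hT : T ^ orderOf (g : G ⧸ N) = ρ ⟨_, QuotientGroup.pow_orderOf_mk_mem N g⟩)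
    (j : ℤ) (hj : g ^ j ∈ N) : T ^ j = ρ ⟨g ^ j, hj⟩ := by
  obtain ⟨t, rfl⟩ : (orderOf (g : G ⧸ N) : ℤ) ∣ j := by
    rwa [orderOf_dvd_iff_zpow_eq_one, ← QuotientGroup.mk_zpow, QuotientGroup.eq_one_iff]
  rw [zpow_mul, zpow_natCast, hT, ← map_zpow]
  congr 1
  ext
  simp [zpow_mul]

theorem exists_extension_of_forall_mem_zpowers (ρ : N →* U) {g : G}
    (hg : ∀ x : G ⧸ N, x ∈ Subgroup.zpowers (g : G ⧸ N)) {T : U}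
    (hT : ∀ n, ρ (MulAut.conjNormal g n) = T * ρ n * T⁻¹)
    (hpow : ∀ (j : ℤ) (h : g ^ j ∈ N), T ^ j = ρ ⟨g ^ j, h⟩) :
    ∃ ρ' : G →* U, ∀ n : N, ρ' n = ρ n := by
  set φ : Multiplicative ℤ →* MulAut N := MulAut.conjNormal.comp (zpowersHom G g)
  let π : N ⋊[φ] Multiplicative ℤ →* G :=
    SemidirectProduct.lift N.subtype (zpowersHom G g) fun j => by
      ext n; simp [φ, -map_zpow]
  let ψ : N ⋊[φ] Multiplicative ℤ →* U :=
    SemidirectProduct.lift ρ (zpowersHom U T) fun j => by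
      ext n
      simp only [MonoidHom.coe_comp, Function.comp_apply, zpowersHom_apply,
        MulEquiv.toMonoidHom_eq_coe, MonoidHom.coe_coe, MulAut.conj_apply, φ]
      rw [map_zpow, ρ.map_zpow_apply_eq_conj hT]
  have hπ : Function.Surjective π := by
    intro x
    obtain ⟨j, hj⟩ := Subgroup.mem_zpowers_iff.mp (hg x)
    have hx : x * g ^ (-j) ∈ N := by
      rw [← QuotientGroup.eq_one_iff, QuotientGroup.mk_mul, QuotientGroup.mk_zpow, zpow_neg, hj,
        mul_inv_cancel]
    exact ⟨⟨⟨_, hx⟩, Multiplicative.ofAdd j⟩, by simp [π, SemidirectProduct.lift]⟩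
  have hker : π.ker ≤ ψ.ker := by
    rintro ⟨n, j⟩ hx
    simp only [π, SemidirectProduct.lift, MonoidHom.mem_ker, MonoidHom.coe_mk, OneHom.coe_mk,
      Subgroup.coe_subtype, zpowersHom_apply] at hx
    have hgj : g ^ j.toAdd ∈ N := by
      rw [eq_inv_of_mul_eq_one_right hx]; exact inv_mem n.2
    have hn : n * ⟨_, hgj⟩ = 1 := Subtype.ext hx
    simp [ψ, SemidirectProduct.lift, hpow _ hgj, ← map_mul, hn]
  refine ⟨π.liftOfSurjective hπ ⟨ψ, hker⟩, fun n => ?_⟩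
  simpa [π, ψ] using π.liftOfRightInverse_comp_apply _ _ ⟨ψ, hker⟩ (SemidirectProduct.inl n)

end CyclicExtension

/-- An irreducible representation of a normal subgroup `N ◁ G` with finite cyclic
quotient, over an algebraically closed field, which is isomorphic to all its
`G`-conjugates, extends to a representation of `G`. -/
theorem extend_irreducible_rep_of_cyclic_quotient
    (k : Type*) [Field k] [IsAlgClosed k]
    (G : Type*) [Group G] (N : Subgroup G) (hN : N.Normal)
    [Finite (G ⧸ N)] [IsCyclic (G ⧸ N)]
    (V : Type*) [AddCommGroup V] [Module k V] [FiniteDimensional k V]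
    (ρ : N →* LinearMap.GeneralLinearGroup k V)
    (hirr : ∀ W : Submodule k V,
      (∀ n : N, ∀ v ∈ W, (ρ n : V →ₗ[k] V) v ∈ W) → W = ⊥ ∨ W = ⊤)
    (hconj : ∀ g : G, ∃ T : V ≃ₗ[k] V, ∀ (n : N) (v : V),
      T ((ρ n : V →ₗ[k] V) v) =
        (ρ ⟨g * (n : G) * g⁻¹, hN.conj_mem (n : G) n.2 g⟩ : V →ₗ[k] V) (T v)) :
    ∃ ρ' : G →* LinearMap.GeneralLinearGroup k V, ∀ n : N, ρ' (n : G) = ρ n := by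
  have := hN
  obtain ⟨q, hq⟩ := IsCyclic.exists_generator (α := G ⧸ N)
  obtain ⟨g, rfl⟩ := QuotientGroup.mk_surjective q
  obtain ⟨e, he⟩ := hconj g
  have hT : ∀ n, ρ (MulAut.conjNormal g n) = .ofLinearEquiv e * ρ n * (.ofLinearEquiv e)⁻¹ :=
    fun n => eq_mul_inv_iff_mul_eq.mpr <| Units.ext <| LinearMap.ext fun v => (he n v).symm
  obtain ⟨T, hT, hTm⟩ := exists_conj_eq_and_pow_eq_of_irreducible ρ hirr hT
    (orderOf_pos (g : G ⧸ N)) (n₀ := ⟨_, QuotientGroup.pow_orderOf_mk_mem N g⟩)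
    (by ext; simp [← map_pow])
  exact exists_extension_of_forall_mem_zpowers ρ hq hT (ρ.zpow_eq_of_pow_orderOf_mk_eq hTm)
end

section
/- Let θ₁,…,θ_n ∈ ℂ be pairwise distinct complex numbers and c₁,…,c_n ∈ ℂ. If the sequence m ↦ ∑_{k=1}^n c_k·θ_k^m (m ∈ ℕ) is bounded, then c_k = 0 for every index k with |θ_k| > 1. -/
/-!
Let `P` be the Lagrange basis polynomial of the nodes `θ` at `k`, so `P(θ j) = δ_{jk}`.
Applying `P` to the shift operator turns `s m = ∑ cⱼ θⱼ^m` into `cₖ θₖ^m`, and a finite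
combination of shifts of a bounded sequence is bounded. A bounded sequence `cₖ θₖ^m` with
`‖θₖ‖ > 1` must vanish.
-/

open Finset

namespace Polynomial

variable {R : Type*}

def evalShift [Semiring R] (P : R[X]) (s : ℕ → R) (m : ℕ) : R :=
  P.sum fun i a => a * s (m + i)

theorem evalShift_sum_mul_pow [CommSemiring R] {ι : Type*} (P : R[X]) (t : Finset ι)
    (c θ : ι → R) (m : ℕ) :
    P.evalShift (fun m => ∑ j ∈ t, c j * θ j ^ m) m = ∑ j ∈ t, c j * P.eval (θ j) * θ j ^ m := by
  simp only [evalShift, eval_eq_sum, sum_def, mul_sum, sum_mul]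
  rw [sum_comm]
  refine sum_congr rfl fun j _ => sum_congr rfl fun i _ => ?_
  rw [pow_add]
  ring

theorem norm_evalShift_le [SeminormedRing R] (P : R[X]) {s : ℕ → R} {M : ℝ}
    (hs : ∀ m, ‖s m‖ ≤ M) (m : ℕ) :
    ‖P.evalShift s m‖ ≤ (∑ i ∈ P.support, ‖P.coeff i‖) * M := by
  rw [evalShift, sum_def, sum_mul]
  refine (norm_sum_le _ _).trans (sum_le_sum fun i _ => ?_)
  exact (norm_mul_le _ _).trans (mul_le_mul_of_nonneg_left (hs _) (norm_nonneg _))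

end Polynomial

theorem eq_zero_of_norm_mul_pow_le {K : Type*} [NormedDivisionRing K] {c θ : K}
    (hθ : 1 < ‖θ‖) {M : ℝ} (h : ∀ m : ℕ, ‖c * θ ^ m‖ ≤ M) : c = 0 := by
  by_contra hc
  have hc' : 0 < ‖c‖ := norm_pos_iff.2 hc
  obtain ⟨m, hm⟩ :=
    ((tendsto_pow_atTop_atTop_of_one_lt hθ).eventually_gt_atTop (M / ‖c‖)).exists
  rw [div_lt_iff₀ hc', mul_comm] at hm
  have := h m
  rw [norm_mul, norm_pow] at this
  linarith

/-- If the sequence `m ↦ ∑ cₖ θₖ^m` is bounded for pairwise distinct complex numbers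
`θₖ`, then `cₖ = 0` whenever `|θₖ| > 1`. -/
theorem coeff_eq_zero_of_bounded_powersum_of_abs_gt_one
    (n : ℕ) (θ c : Fin n → ℂ) (hθ : Function.Injective θ)
    (hbd : ∃ M : ℝ, ∀ m : ℕ, ‖∑ k : Fin n, c k * θ k ^ m‖ ≤ M) :
    ∀ k, 1 < ‖θ k‖ → c k = 0 := by
  obtain ⟨M, hM⟩ := hbd
  intro k hk
  set P := Lagrange.basis univ θ k
  have hP : ∀ m, P.evalShift (fun m => ∑ j, c j * θ j ^ m) m = c k * θ k ^ m := by
    intro m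
    rw [P.evalShift_sum_mul_pow, sum_eq_single k]
    · rw [Lagrange.eval_basis_self hθ.injOn (mem_univ k), mul_one]
    · intro j _ hjk
      rw [Lagrange.eval_basis_of_ne hjk.symm (mem_univ j), mul_zero, zero_mul]
    · exact fun hk => absurd (mem_univ k) hk
  exact eq_zero_of_norm_mul_pow_le hk fun m => hP m ▸ P.norm_evalShift_le hM m
end
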